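/- The even lattices U ⊕ N_8 and U(2) ⊕ D_4 ⊕ D_4 of signature (9,1) are isometric, where N_8 is the lattice generated by a1,...,a8 with (a_i,a_j) = 2δ_ij together with (a1 + ... + a8)/2, and D_4 = {x ∈ ℤ^4 : x_1 + ... + x_4 even} with the Euclidean form multiplied by 1 (i.e., the even sublattice of Euclidean ℤ^4). -/

import Mathlib

/-- The bilinear form of `U ⊕ N₈` on `ℚ^10`: coordinates `(c1, c2)` for `U` with
`(c1,c2) = -1`, and the remaining 8 coordinates for `N₈` with form `2·dot`
(the generators `a_i` are the standard basis vectors, `(a_i,a_j) = 2δ_ij`). -/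
def BA (x y : Fin 10 → ℚ) : ℚ :=
  -(x 0 * y 1 + x 1 * y 0) + 2 * ∑ i : Fin 8, x i.succ.succ * y i.succ.succ

/-- The bilinear form of `U(2) ⊕ D₄ ⊕ D₄` on `ℚ^10`: coordinates `(c1, c2)` for `U(2)`
with `(c1,c2) = -2`, and the remaining 8 coordinates Euclidean (two copies of `ℤ^4`
containing the two copies of `D₄`). -/
def BB (x y : Fin 10 → ℚ) : ℚ :=
  -2 * (x 0 * y 1 + x 1 * y 0) + ∑ i : Fin 8, x i.succ.succ * y i.succ.succ

/-- The lattice `U ⊕ N₈ ⊂ ℚ^10`: `N₈ = ℤ^8 + ℤ·(a1+…+a8)/2`. -/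
def LA : Set (Fin 10 → ℚ) :=
  {x | (∃ a : ℤ, x 0 = a) ∧ (∃ a : ℤ, x 1 = a) ∧
    ((∀ i : Fin 8, ∃ k : ℤ, x i.succ.succ = k) ∨
      (∀ i : Fin 8, ∃ k : ℤ, x i.succ.succ = k + 1/2))}

/-- The lattice `U(2) ⊕ D₄ ⊕ D₄ ⊂ ℚ^10`: integer vectors whose coordinates `2,3,4,5`
have even sum and whose coordinates `6,7,8,9` have even sum. -/
def LB : Set (Fin 10 → ℚ) :=
  {x | (∃ a : ℤ, x 0 = a) ∧ (∃ a : ℤ, x 1 = a) ∧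
    (∀ i : Fin 8, ∃ k : ℤ, x i.succ.succ = k) ∧
    (∃ m : ℤ, x 2 + x 3 + x 4 + x 5 = 2 * m) ∧
    (∃ m : ℤ, x 6 + x 7 + x 8 + x 9 = 2 * m)}


/-!
`LA` has the ℤ-basis `e₀, e₁, a₁, …, a₇, h` with `h = (a₁ + ⋯ + a₈)/2`, in which `BA` is visibly
even. The integral matrix `isoMat` preserves the forms and sends this basis to integral vectors
whose ℤ-span is exactly the set of integral vectors with even coordinate sums on both `D₄`
blocks, i.e. `LB`. An isometry of the nondegenerate form `BA` is injective, hence an automorphism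
of `ℚ¹⁰`, and `LB` is even as the isometric image of `LA`.
-/

open Matrix

theorem forall_int_or_forall_halfInt_iff {ι : Type*} (x : ι → ℚ) :
    ((∀ i, ∃ k : ℤ, x i = k) ∨ (∀ i, ∃ k : ℤ, x i = k + 1 / 2)) ↔
      ∃ t : ℤ, ∀ i, ∃ k : ℤ, x i = k + t / 2 := by
  constructor
  · rintro (h | h)
    · exact ⟨0, by simpa using h⟩
    · exact ⟨1, by simpa using h⟩
  · rintro ⟨t, h⟩
    choose k hk using h
    rcases Int.even_or_odd' t with ⟨s, rfl | rfl⟩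
    · exact Or.inl fun i => ⟨k i + s, by rw [hk]; push_cast; ring⟩
    · exact Or.inr fun i => ⟨k i + s, by rw [hk]; push_cast; ring⟩

theorem BA_apply (x y : Fin 10 → ℚ) :
    BA x y = -(x 0 * y 1 + x 1 * y 0) + 2 * (x 2 * y 2 + x 3 * y 3 + x 4 * y 4 + x 5 * y 5 +
      x 6 * y 6 + x 7 * y 7 + x 8 * y 8 + x 9 * y 9) := by
  simp [BA, Fin.sum_univ_eight]

theorem BB_apply (x y : Fin 10 → ℚ) :
    BB x y = -2 * (x 0 * y 1 + x 1 * y 0) + (x 2 * y 2 + x 3 * y 3 + x 4 * y 4 + x 5 * y 5 +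
      x 6 * y 6 + x 7 * y 7 + x 8 * y 8 + x 9 * y 9) := by
  simp [BB, Fin.sum_univ_eight]

theorem BA_nondegenerate {x : Fin 10 → ℚ} (h : ∀ y, BA x y = 0) : x = 0 := by
  ext i
  have := h (Pi.single (Equiv.swap 0 1 i) 1)
  fin_cases i <;> simpa [BA_apply, Equiv.swap_apply_of_ne_of_ne] using this

/-- The integer combination `z` of the basis `e₀, e₁, a₁, …, a₇, h` of `LA`. -/
def intCombLA (z : Fin 10 → ℤ) : Fin 10 → ℚ :=
  ![z 0, z 1, z 2 + z 9 / 2, z 3 + z 9 / 2, z 4 + z 9 / 2, z 5 + z 9 / 2, z 6 + z 9 / 2,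
    z 7 + z 9 / 2, z 8 + z 9 / 2, z 9 / 2]

theorem LA_eq_range_intCombLA : LA = Set.range intCombLA := by
  ext x
  rw [LA, Set.mem_ofPred_eq, forall_int_or_forall_halfInt_iff]
  constructor
  · rintro ⟨⟨a, ha⟩, ⟨b, hb⟩, t, hk⟩
    choose k hk using hk
    simp only [Fin.forall_fin_succ, Fin.succ_zero_eq_one, Fin.succ_one_eq_two, Fin.reduceSucc,
      IsEmpty.forall_iff, and_true] at hk
    refine ⟨![a, b, k 0 - k 7, k 1 - k 7, k 2 - k 7, k 3 - k 7, k 4 - k 7, k 5 - k 7, k 6 - k 7,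
      2 * k 7 + t], ?_⟩
    ext i
    fin_cases i <;> simp [intCombLA, ha, hb, hk] <;> ring
  · rintro ⟨z, rfl⟩
    refine ⟨⟨z 0, rfl⟩, ⟨z 1, rfl⟩, z 9, ?_⟩
    simp [Fin.forall_fin_succ, intCombLA]

theorem BA_self_even_of_mem_LA {x : Fin 10 → ℚ} (hx : x ∈ LA) : ∃ n : ℤ, BA x x = 2 * n := by
  rw [LA_eq_range_intCombLA] at hx
  obtain ⟨z, rfl⟩ := hx
  refine ⟨-(z 0 * z 1) + z 2 ^ 2 + z 3 ^ 2 + z 4 ^ 2 + z 5 ^ 2 + z 6 ^ 2 + z 7 ^ 2 + z 8 ^ 2 +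
    z 9 * (z 2 + z 3 + z 4 + z 5 + z 6 + z 7 + z 8) + 2 * z 9 ^ 2, ?_⟩
  simp [BA_apply, intCombLA]
  ring

def LBInt : Set (Fin 10 → ℤ) :=
  {w | Even (w 2 + w 3 + w 4 + w 5) ∧ Even (w 6 + w 7 + w 8 + w 9)}

theorem LB_eq_image_LBInt : LB = (fun w i => (w i : ℚ)) '' LBInt := by
  ext y
  constructor
  · rintro ⟨⟨a, ha⟩, ⟨b, hb⟩, hk, ⟨m₁, hm₁⟩, ⟨m₂, hm₂⟩⟩
    choose k hk using hk
    simp only [Fin.forall_fin_succ, Fin.succ_zero_eq_one, Fin.succ_one_eq_two, Fin.reduceSucc,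
      IsEmpty.forall_iff, and_true] at hk
    set w : Fin 10 → ℤ := ![a, b, k 0, k 1, k 2, k 3, k 4, k 5, k 6, k 7]
    have hy : y = fun i => (w i : ℚ) := by
      ext i
      fin_cases i <;> simp [w, ha, hb, hk]
    subst hy
    beta_reduce at hm₁ hm₂
    exact ⟨w, ⟨⟨m₁, by exact_mod_cast hm₁.trans (two_mul _)⟩,
      ⟨m₂, by exact_mod_cast hm₂.trans (two_mul _)⟩⟩, rfl⟩
  · rintro ⟨w, ⟨⟨m₁, hm₁⟩, ⟨m₂, hm₂⟩⟩, rfl⟩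
    refine ⟨⟨w 0, rfl⟩, ⟨w 1, rfl⟩, fun i => ⟨w i.succ.succ, rfl⟩, ⟨m₁, ?_⟩, ⟨m₂, ?_⟩⟩
    · beta_reduce; exact_mod_cast hm₁.trans (two_mul _).symm
    · beta_reduce; exact_mod_cast hm₂.trans (two_mul _).symm

def isoMat : Matrix (Fin 10) (Fin 10) ℚ :=
  !![1, 1, -1, 0, 1, 1, 1, 0, 0, 0;
     1, 1, 0, -1, 1, 1, 1, 0, 0, 0;
     1, 0, 0, 0, 0, 1, 1, 0, 0, 0;
     1, 1, 0, 0, 2, 1, 1, 0, 0, 0;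
     0, -1, 0, 0, 0, -1, -1, 0, 0, 0;
     0, 0, 0, 0, 0, -1, 1, 0, 0, 0;
     1, 1, -1, -1, 1, 1, 1, -1, 0, 0;
     1, 1, -1, -1, 1, 1, 1, 1, 0, 0;
     0, 0, 0, 0, 0, 0, 0, 0, -1, -1;
     0, 0, 0, 0, 0, 0, 0, 0, 1, -1]

/-- The matrix of `isoMat` with respect to the basis of `LA` and the standard basis. -/
def isoMatOnBasisLA : Matrix (Fin 10) (Fin 10) ℤ :=
  !![1, 1, -1, 0, 1, 1, 1, 0, 0, 1;
     1, 1, 0, -1, 1, 1, 1, 0, 0, 1;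
     1, 0, 0, 0, 0, 1, 1, 0, 0, 1;
     1, 1, 0, 0, 2, 1, 1, 0, 0, 2;
     0, -1, 0, 0, 0, -1, -1, 0, 0, -1;
     0, 0, 0, 0, 0, -1, 1, 0, 0, 0;
     1, 1, -1, -1, 1, 1, 1, -1, 0, 0;
     1, 1, -1, -1, 1, 1, 1, 1, 0, 1;
     0, 0, 0, 0, 0, 0, 0, 0, -1, -1;
     0, 0, 0, 0, 0, 0, 0, 0, 1, 0]

theorem isoMat_mulVec_intCombLA (z : Fin 10 → ℤ) :
    isoMat *ᵥ intCombLA z = fun i => ((isoMatOnBasisLA *ᵥ z) i : ℚ) := by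
  ext i
  fin_cases i <;>
    simp [isoMat, isoMatOnBasisLA, intCombLA, mulVec, dotProduct, Fin.sum_univ_succ] <;> ring

theorem range_isoMatOnBasisLA_mulVec : Set.range (isoMatOnBasisLA *ᵥ ·) = LBInt := by
  ext w
  constructor
  · rintro ⟨z, rfl⟩
    refine ⟨⟨z 0 + z 4 + z 6 + z 9, ?_⟩, ⟨z 0 + z 1 - z 2 - z 3 + z 4 + z 5 + z 6, ?_⟩⟩ <;>
      simp [isoMatOnBasisLA, mulVec, dotProduct, Fin.sum_univ_succ] <;> ring
  · rintro ⟨⟨m₁, hm₁⟩, ⟨m₂, hm₂⟩⟩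
    -- `isoMatOnBasisLA⁻¹ *ᵥ w`, whose half-integral entries become integral through `m₁, m₂`
    refine ⟨![2 * w 0 + 2 * w 1 - w 3 + w 4 - w 6 - w 7, 2 * w 0 + 2 * w 1 - w 2 - w 3 - w 6 - w 7,
      w 1 - w 6 - w 7 + m₂, w 0 - w 6 - w 7 + m₂, -w 0 - w 1 + w 3 + m₂,
      -w 0 - w 1 + m₁ - w 4 - w 5 + m₂, -w 0 - w 1 + m₁ - w 4 + m₂, m₂ - w 6, w 9, -w 8 - w 9], ?_⟩
    ext i
    fin_cases i <;> simp [isoMatOnBasisLA, mulVec, dotProduct, Fin.sum_univ_succ] <;> omega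

theorem BB_isoMat_mulVec (x y : Fin 10 → ℚ) : BB (isoMat *ᵥ x) (isoMat *ᵥ y) = BA x y := by
  simp [BA_apply, BB_apply, isoMat, dotProduct, Fin.sum_univ_succ]
  ring

theorem isoMat_mulVec_injective : Function.Injective (isoMat *ᵥ ·) := by
  refine (injective_iff_map_eq_zero (toLin' isoMat)).2 fun x hx => BA_nondegenerate fun y => ?_
  rw [toLin'_apply] at hx
  rw [← BB_isoMat_mulVec, hx, BB_apply]
  simp

theorem LB_eq_image_isoMat_mulVec : LB = (isoMat *ᵥ ·) '' LA := by
  rw [LA_eq_range_intCombLA, ← Set.range_comp, LB_eq_image_LBInt, ← range_isoMatOnBasisLA_mulVec,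
    ← Set.range_comp]
  exact congrArg Set.range (funext fun z => (isoMat_mulVec_intCombLA z).symm)

/-- The even lattices `U ⊕ N₈` and `U(2) ⊕ D₄ ⊕ D₄` are isometric. -/
theorem stmt11 :
    (∀ v ∈ LA, ∃ n : ℤ, BA v v = 2 * n) ∧
    (∀ v ∈ LB, ∃ n : ℤ, BB v v = 2 * n) ∧
    (∃ f : (Fin 10 → ℚ) ≃ₗ[ℚ] (Fin 10 → ℚ),
      ⇑f '' LA = LB ∧ ∀ x y, BB (f x) (f y) = BA x y) := by
  refine ⟨fun _ => BA_self_even_of_mem_LA, ?_,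
    LinearEquiv.ofInjectiveEndo (toLin' isoMat) isoMat_mulVec_injective,
    LB_eq_image_isoMat_mulVec.symm, BB_isoMat_mulVec⟩
  rw [LB_eq_image_isoMat_mulVec]
  rintro _ ⟨x, hx, rfl⟩
  rw [BB_isoMat_mulVec]
  exact BA_self_even_of_mem_LA hx
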